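/- Let P be a possibilistic positive clausal program. Then S^w_P, the set of minimally specific possibility distributions satisfying the weak constraints of P, is a singleton; that is, there is a unique least specific possibility distribution satisfying the constraints imposed by P. -/
import Mathlib


open Classical

namespace PASP

/-- An interpretation assigns a truth value to each atom. -/
abbrev Interp (A : Type) := A → Bool

/-- A literal is an atom with a sign (`true` = positive, `false` = classical negation). -/
abbrev Lit (A : Type) := A × Bool

/-- A possibility distribution on interpretations. -/
abbrev PossDist (A : Type) := Interp A → ℝ

variable {A : Type}

def litSat (ω : Interp A) (l : Lit A) : Prop := ω l.1 = l.2

def IsPossDist (π : PossDist A) : Prop := ∀ ω, 0 ≤ π ω ∧ π ω ≤ 1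

noncomputable def poss (π : PossDist A) (p : Interp A → Prop) : ℝ :=
  sSup {x | ∃ ω, p ω ∧ π ω = x}

noncomputable def nec (π : PossDist A) (p : Interp A → Prop) : ℝ :=
  1 - poss π fun ω => ¬ p ω

noncomputable def necLit (π : PossDist A) (l : Lit A) : ℝ :=
  nec π fun ω => litSat ω l

def Consistent (M : Set (Lit A)) : Prop :=
  ∀ a : A, ¬ ((a, true) ∈ M ∧ (a, false) ∈ M)

def MinSpecific (S : Set (PossDist A)) (π : PossDist A) : Prop :=
  π ∈ S ∧ ∀ π' ∈ S, π ≤ π' → π' = π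


/-- A clause is a finite disjunction of literals. -/
abbrev Clause (A : Type) := Finset (Lit A)

/-- Satisfaction of a clause by an interpretation. -/
def clauseSat (ω : Interp A) (e : Clause A) : Prop := ∃ l ∈ e, litSat ω l

/-- The necessity of a clause. -/
noncomputable def necCl (π : PossDist A) (e : Clause A) : ℝ :=
  nec π fun ω => clauseSat ω e

/-- Propositional entailment of a clause by a set of clauses. -/
def entails (S : Set (Clause A)) (e : Clause A) : Prop :=
  ∀ ω : Interp A, (∀ e' ∈ S, clauseSat ω e') → clauseSat ω e

/-- A possibilistic positive clausal rule `(e₀ ← e₁,…,e_m, λ)`. -/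
structure PClausalRule (A : Type) where
  head : Clause A
  body : Finset (Clause A)
  wt : ℝ

/-- The head clauses of a possibilistic positive clausal program. -/
def headsOfP (P : Set (PClausalRule A)) : Set (Clause A) := {e | ∃ r ∈ P, r.head = e}

/-- `min(N(e₁),…,N(e_m))`, the minimum of the empty list being 1. -/
noncomputable def minBodyCl (π : PossDist A) (B : Finset (Clause A)) : ℝ :=
  sInf (insert 1 (necCl π '' (↑B : Set (Clause A))))

/-- The weak constraint `N(e₀) ≥ min(N(e₁),…,N(e_m), λ)` of a possibilistic positive
clausal rule. -/
def weakConstraint (π : PossDist A) (r : PClausalRule A) : Prop :=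
  min (minBodyCl π r.body) r.wt ≤ necCl π r.head

/-- The possibility distributions satisfying the weak constraints of all rules of `P`. -/
def weakModels (P : Set (PClausalRule A)) : Set (PossDist A) :=
  {π | IsPossDist π ∧ ∀ r ∈ P, weakConstraint π r}

section Aux

variable {A : Type} [Fintype A]

lemma possSet_eq (π : PossDist A) (p : Interp A → Prop) :
    {x | ∃ ω, p ω ∧ π ω = x} = π '' {ω | p ω} := by
  ext x; simp [Set.image, eq_comm]

lemma bddAbove_possSet (π : PossDist A) (p : Interp A → Prop) :
    BddAbove {x | ∃ ω, p ω ∧ π ω = x} := by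
  rw [possSet_eq]
  exact (Set.toFinite _).bddAbove

lemma le_poss (π : PossDist A) {p : Interp A → Prop} {ω : Interp A} (hω : p ω) :
    π ω ≤ poss π p :=
  le_csSup (bddAbove_possSet π p) ⟨ω, hω, rfl⟩

lemma poss_le (π : PossDist A) {p : Interp A → Prop} {c : ℝ} (hc : 0 ≤ c)
    (h : ∀ ω, p ω → π ω ≤ c) : poss π p ≤ c := by
  refine Real.sSup_le ?_ hc
  rintro x ⟨ω, hω, rfl⟩
  exact h ω hω

lemma poss_mono {π π' : PossDist A} (hπ' : ∀ ω, 0 ≤ π' ω) (h : π ≤ π')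
    (p : Interp A → Prop) : poss π p ≤ poss π' p := by
  by_cases hp : ∃ ω, p ω
  · obtain ⟨ω₀, hω₀⟩ := hp
    refine Real.sSup_le ?_ (le_trans (hπ' ω₀) (le_poss π' hω₀))
    rintro x ⟨ω, hω, rfl⟩
    exact le_trans (h ω) (le_poss π' hω)
  · have : {x | ∃ ω, p ω ∧ π ω = x} = ∅ := by
      ext x; simp only [Set.mem_setOf_eq, Set.mem_empty_iff_false, iff_false]
      rintro ⟨ω, hω, -⟩; exact hp ⟨ω, hω⟩
    rw [poss, this, Real.sSup_empty]
    by_cases hq : ∃ ω, p ω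
    · exact absurd hq hp
    · have : {x | ∃ ω, p ω ∧ π' ω = x} = ∅ := by
        ext x; simp only [Set.mem_setOf_eq, Set.mem_empty_iff_false, iff_false]
        rintro ⟨ω, hω, -⟩; exact hp ⟨ω, hω⟩
      rw [poss, this, Real.sSup_empty]

lemma nec_antitone {π π' : PossDist A} (hπ' : ∀ ω, 0 ≤ π' ω) (h : π ≤ π')
    (p : Interp A → Prop) : nec π' p ≤ nec π p := by
  have := poss_mono hπ' h (fun ω => ¬ p ω)
  simp only [nec]; linarith

lemma necCl_antitone {π π' : PossDist A} (hπ' : ∀ ω, 0 ≤ π' ω) (h : π ≤ π')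
    (e : Clause A) : necCl π' e ≤ necCl π e :=
  nec_antitone hπ' h _

lemma bddBelow_bodySet (π : PossDist A) (B : Finset (Clause A)) :
    BddBelow (insert (1:ℝ) (necCl π '' (↑B : Set (Clause A)))) :=
  (Set.Finite.insert _ ((B.finite_toSet).image _)).bddBelow

lemma minBodyCl_mono {π π' : PossDist A} (hπ' : ∀ ω, 0 ≤ π' ω) (h : π ≤ π')
    (B : Finset (Clause A)) : minBodyCl π' B ≤ minBodyCl π B := by
  refine le_csInf ⟨1, Set.mem_insert _ _⟩ ?_
  rintro x (rfl | ⟨e, he, rfl⟩)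
  · exact csInf_le (bddBelow_bodySet π' B) (Set.mem_insert _ _)
  · exact le_trans
      (csInf_le (bddBelow_bodySet π' B) (Set.mem_insert_of_mem _ ⟨e, he, rfl⟩))
      (necCl_antitone hπ' h e)

lemma zero_mem_weakModels (P : Set (PClausalRule A))
    (hP : ∀ r ∈ P, 0 < r.wt ∧ r.wt ≤ 1) :
    (fun _ => (0:ℝ)) ∈ weakModels P := by
  constructor
  · intro ω; exact ⟨le_rfl, zero_le_one⟩
  · intro r hr
    have hposs : poss (fun _ => (0:ℝ)) (fun ω => ¬ clauseSat ω r.head) ≤ 0 :=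
      poss_le _ le_rfl (fun ω _ => le_rfl)
    have : (1:ℝ) ≤ necCl (fun _ => (0:ℝ)) r.head := by
      simp only [necCl, nec]; linarith
    exact le_trans (le_trans (min_le_right _ _) (hP r hr).2) this

end Aux

/-- for a possibilistic positive clausal program `P`, the set `S^w_P` of
minimally specific possibility distributions satisfying the weak constraints of `P`
is a singleton; equivalently there is a unique least specific (i.e. greatest)
possibilistic model of `P`. -/
theorem stmt7 {A : Type} [Fintype A] (P : Set (PClausalRule A))
    (hP : ∀ r ∈ P, 0 < r.wt ∧ r.wt ≤ 1) :
    ∃ π : PossDist A, {π' | MinSpecific (weakModels P) π'} = {π} ∧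
      IsGreatest (weakModels P) π := by
  classical
  set S := weakModels P with hS
  have h0 : (fun _ => (0:ℝ)) ∈ S := zero_mem_weakModels P hP
  set π : PossDist A := fun ω => sSup ((fun π' => π' ω) '' S) with hπdef
  have hbdd : ∀ ω, BddAbove ((fun π' => π' ω) '' S) := by
    intro ω
    refine ⟨1, ?_⟩
    rintro x ⟨π', hπ', rfl⟩
    exact (hπ'.1 ω).2
  have hne : ∀ ω, ((fun π' => π' ω) '' S).Nonempty := fun ω => ⟨0, _, h0, rfl⟩
  have hub : ∀ π' ∈ S, π' ≤ π := by
    intro π' hπ' ω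
    exact le_csSup (hbdd ω) ⟨π', hπ', rfl⟩
  have hpd : IsPossDist π := by
    intro ω
    constructor
    · exact le_csSup (hbdd ω) ⟨_, h0, rfl⟩
    · refine csSup_le (hne ω) ?_
      rintro x ⟨π', hπ', rfl⟩
      exact (hπ'.1 ω).2
  have hπ0 : ∀ ω, 0 ≤ π ω := fun ω => (hpd ω).1
  have hmem : π ∈ S := by
    refine ⟨hpd, ?_⟩
    intro r hr
    set c := min (minBodyCl π r.body) r.wt with hc
    have hc1 : c ≤ 1 := le_trans (min_le_right _ _) (hP r hr).2
    have hkey : ∀ π' ∈ S, c ≤ necCl π' r.head := by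
      intro π' hπ'
      refine le_trans ?_ (hπ'.2 r hr)
      exact min_le_min (minBodyCl_mono hπ0 (hub π' hπ') r.body) le_rfl
    have hposs : poss π (fun ω => ¬ clauseSat ω r.head) ≤ 1 - c := by
      refine poss_le _ (by linarith) ?_
      intro ω hω
      refine csSup_le (hne ω) ?_
      rintro x ⟨π', hπ', rfl⟩
      have h1 : π' ω ≤ poss π' (fun ω => ¬ clauseSat ω r.head) := le_poss π' hω
      have h2 : c ≤ necCl π' r.head := hkey π' hπ'
      simp only [necCl, nec] at h2
      linarith
    show c ≤ necCl π r.head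
    simp only [necCl, nec]
    linarith
  refine ⟨π, ?_, hmem, hub⟩
  ext π'
  simp only [Set.mem_setOf_eq, Set.mem_singleton_iff]
  constructor
  · rintro ⟨h1, h2⟩
    exact (h2 π hmem (hub π' h1)).symm
  · rintro rfl
    exact ⟨hmem, fun π'' h'' hle => le_antisymm (hub π'' h'') hle⟩

end PASP
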